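/- arXiv:2007.00840 — 7 statements merged into one kernel-verified Lean document; each statement's English description precedes it below -/
import Mathlib

section
/- For a directed graph G on vertices {0,...,n-1}, define a fill-path from i to j as a directed path from i to j in G all of whose intermediate vertices are strictly less than min(i,j). If there is a fill-path from i to j, and G' is obtained from G by adding the edge (i,j), then for any vertices a, b, every fill-path from a to b in G' can be replaced by a fill-path from a to b in the original graph G (i.e., fill-reachability is the same in G and G'). -/
/-- `IsPath G a l b` : there is a directed path from `a` to `b` in `G` whose
list of intermediate vertices (in order) is `l`; the path has length ≥ 1. -/
def IsPath (G : ℕ → ℕ → Prop) : ℕ → List ℕ → ℕ → Prop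
  | a, [], b => G a b
  | a, x :: xs, b => G a x ∧ IsPath G x xs b

/-- A fill-path from `i` to `j`: a directed path all of whose intermediate
vertices are strictly less than both `i` and `j` (i.e. less than `min i j`). -/
def FillPath (G : ℕ → ℕ → Prop) (i j : ℕ) : Prop :=
  ∃ l, IsPath G i l j ∧ ∀ v ∈ l, v < i ∧ v < j

lemma IsPath.mono {G G' : ℕ → ℕ → Prop} (h : ∀ x y, G x y → G' x y) :
    ∀ (l : List ℕ) (a b : ℕ), IsPath G a l b → IsPath G' a l b
  | [], a, b, h' => h a b h'
  | x :: xs, a, b, ⟨h1, h2⟩ => ⟨h a x h1, IsPath.mono h xs x b h2⟩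

lemma IsPath.append {G : ℕ → ℕ → Prop} :
    ∀ (p : List ℕ) (a x m b), IsPath G a p x → IsPath G x m b →
      IsPath G a (p ++ x :: m) b
  | [], a, x, m, b, h1, h2 => ⟨h1, h2⟩
  | y :: ys, a, x, m, b, ⟨h1, h1'⟩, h2 => ⟨h1, IsPath.append ys y x m b h1' h2⟩

/-- If there is a fill-path from `i` to `j` in `G`, then adding the edge `(i,j)`
to `G` does not change fill-reachability: any fill-path from `a` to `b` in the
augmented graph can be replaced by one in the original graph `G`. -/
theorem fillpath_invariant_under_fill_edge_addition
    (G : ℕ → ℕ → Prop) (i j : ℕ) (hfill : FillPath G i j) (a b : ℕ) :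
    FillPath (fun x y => G x y ∨ (x = i ∧ y = j)) a b ↔ FillPath G a b := by
  obtain ⟨p, hp, hpb⟩ := hfill
  constructor
  · rintro ⟨l, hl, hb⟩
    have key : ∀ (l : List ℕ) (c a : ℕ),
        IsPath (fun x y => G x y ∨ (x = i ∧ y = j)) a l b →
        (∀ v ∈ l, v < c ∧ v < b) →
        ∃ m, IsPath G a m b ∧ ∀ v ∈ m, (v < c ∨ v < a) ∧ v < b := by
      intro l
      induction l with
      | nil =>
        intro c a h _
        rcases h with h | ⟨rfl, rfl⟩
        · exact ⟨[], h, by simp⟩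
        · exact ⟨p, hp, fun v hv => ⟨Or.inr (hpb v hv).1, (hpb v hv).2⟩⟩
      | cons x xs ih =>
        rintro c a ⟨h1, h2⟩ hb
        obtain ⟨hxc, hxb⟩ := hb x (by simp)
        obtain ⟨m, hm, hmb⟩ := ih c x h2 (fun v hv => hb v (by simp [hv]))
        have hmb' : ∀ v ∈ m, (v < c ∨ v < a) ∧ v < b := by
          intro v hv
          obtain ⟨h3, h4⟩ := hmb v hv
          exact ⟨Or.inl (h3.elim id (fun h => h.trans hxc)), h4⟩
        rcases h1 with h1 | ⟨rfl, rfl⟩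
        · refine ⟨x :: m, ⟨h1, hm⟩, ?_⟩
          intro v hv
          rcases List.mem_cons.mp hv with rfl | hv
          · exact ⟨Or.inl hxc, hxb⟩
          · exact hmb' v hv
        · refine ⟨p ++ x :: m, IsPath.append p a x m b hp hm, ?_⟩
          intro v hv
          rcases List.mem_append.mp hv with hv | hv
          · exact ⟨Or.inr (hpb v hv).1, (hpb v hv).2.trans hxb⟩
          · rcases List.mem_cons.mp hv with rfl | hv
            · exact ⟨Or.inl hxc, hxb⟩
            · exact hmb' v hv
    obtain ⟨m, hm, hmb⟩ := key l a a hl hb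
    exact ⟨m, hm, fun v hv => ⟨(hmb v hv).1.elim id id, (hmb v hv).2⟩⟩
  · rintro ⟨l, hl, hb⟩
    exact ⟨l, IsPath.mono (fun x y h => Or.inl h) l a b hl, hb⟩
end

section
/- Let G be a directed graph on vertices {0,...,n-1}. For a fixed source vertex s and any vertex v reachable from s, define maxId(v) as the minimum, over all directed paths P from s to v whose intermediate vertices are all strictly less than s, of the maximum intermediate-vertex label on P (with maxId(v) = 0 for direct neighbors of s, i.e., paths with no intermediate vertices). Then there is a fill-path from s to v (all intermediate vertices less than both s and v) if and only if v is a neighbor-or-descendant in this restricted reachability and maxId(v) < v, or v is a direct out-neighbor of s. -/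
/-- `maxId G s v` : the minimum, over all admissible paths from `s` to `v`
(paths all of whose intermediate vertices are `< s`), of the maximum
intermediate-vertex label on the path (`0` when there are no intermediates);
`⊤` if `v` is not reachable by an admissible path. -/
noncomputable def maxId (G : ℕ → ℕ → Prop) (s v : ℕ) : ℕ∞ :=
  sInf {m : ℕ∞ | ∃ l, IsPath G s l v ∧ (∀ x ∈ l, x < s) ∧ m = (l.foldr max 0 : ℕ)}

theorem List.foldr_max_lt_iff {α : Type*} [LinearOrder α] {l : List α} {a b : α} :
    l.foldr max a < b ↔ a < b ∧ ∀ x ∈ l, x < b := by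
  induction l with
  | nil => simp
  | cons y l ih => simp only [List.foldr_cons, max_lt_iff, ih, List.forall_mem_cons]; tauto

theorem maxId_lt_iff {G : ℕ → ℕ → Prop} {s v : ℕ} {k : ℕ∞} :
    maxId G s v < k ↔
      ∃ l, IsPath G s l v ∧ (∀ x ∈ l, x < s) ∧ ((l.foldr max 0 : ℕ) : ℕ∞) < k := by
  simp only [maxId, sInf_lt_iff, Set.mem_ofPred_eq]
  constructor
  · rintro ⟨_, ⟨l, hl, hls, rfl⟩, hk⟩
    exact ⟨l, hl, hls, hk⟩
  · rintro ⟨l, hl, hls, hk⟩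
    exact ⟨_, ⟨l, hl, hls, rfl⟩, hk⟩

theorem maxId_lt_coe_iff_fillPath {G : ℕ → ℕ → Prop} {s v : ℕ} (hv : 0 < v) :
    maxId G s v < v ↔ FillPath G s v := by
  simp only [FillPath, maxId_lt_iff, Nat.cast_lt, List.foldr_max_lt_iff, hv, true_and,
    ← forall_and]

/-- There is a fill-path from `s` to `v` iff `v` is a direct out-neighbor of `s`,
or `v` is reachable from `s` by an admissible path and `maxId G s v < v`. -/
theorem fillpath_iff_maxId_lt
    (G : ℕ → ℕ → Prop) (s v : ℕ) :
    FillPath G s v ↔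
      (G s v ∨
        ((∃ l, IsPath G s l v ∧ ∀ x ∈ l, x < s) ∧ maxId G s v < (v : ℕ∞))) := by
  constructor
  · rintro ⟨_ | ⟨a, l⟩, hl, hlv⟩
    · exact Or.inl hl
    · have hv : 0 < v := (hlv a List.mem_cons_self).2.pos
      exact Or.inr ⟨⟨_, hl, fun x hx => (hlv x hx).1⟩,
        (maxId_lt_coe_iff_fillPath hv).2 ⟨_, hl, hlv⟩⟩
  · rintro (hsv | ⟨-, hlt⟩)
    · exact ⟨[], hsv, by simp⟩
    · have hv : 0 < v := by exact_mod_cast pos_of_gt hlt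
      exact (maxId_lt_coe_iff_fillPath hv).1 hlt
end

section
/- With the setup of the previous context, the value maxId(v) (the minimum over admissible paths from s to v of the maximum intermediate vertex on the path) satisfies the following fixed-point recurrence: for every edge (u,v) in G with u < s and u reachable from s by an admissible path, maxId(v) ≤ max(maxId(u), u); and maxId is the pointwise-largest function satisfying maxId(w) = 0 (or -∞) for all direct out-neighbors w of s together with these inequalities. In other words, maxId is the least fixed point of the relaxation operator used by gSoFa. -/
/-!
Every admissible path to `v` is an admissible path to some `u < s` followed by the edge `(u, v)`,
and its top is the maximum of `u` and the top of that shorter path. Induction on the path thus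
bounds every relaxation-closed `f` by the top of each admissible path, hence by `maxId`.
Conversely `ℕ∞` is well ordered, so `maxId u` is attained by an admissible path, and
extending that path by `(u, v)` gives the relaxation inequality for `maxId` itself.
-/

theorem isPath_append_singleton (G : ℕ → ℕ → Prop) (l : List ℕ) (a u b : ℕ) :
    IsPath G a (l ++ [u]) b ↔ IsPath G a l u ∧ G u b := by
  induction l generalizing a with
  | nil => simp [IsPath]
  | cons x xs ih => simp [IsPath, ih, and_assoc]

theorem foldr_max_append_singleton (l : List ℕ) (u : ℕ) :
    (l ++ [u]).foldr max 0 = max (l.foldr max 0) u := by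
  induction l with
  | nil => simp
  | cons x xs ih => simp [ih, max_assoc]

section

variable {G : ℕ → ℕ → Prop} {s : ℕ}

theorem maxId_le_of_isPath {l : List ℕ} {v : ℕ} (hl : IsPath G s l v) (hls : ∀ x ∈ l, x < s) :
    maxId G s v ≤ (l.foldr max 0 : ℕ) :=
  sInf_le ⟨l, hl, hls, rfl⟩

theorem exists_isPath_foldr_max_eq_maxId {l : List ℕ} {v : ℕ} (hl : IsPath G s l v)
    (hls : ∀ x ∈ l, x < s) :
    ∃ l', IsPath G s l' v ∧ (∀ x ∈ l', x < s) ∧ maxId G s v = (l'.foldr max 0 : ℕ) :=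
  csInf_mem (s := {m : ℕ∞ | ∃ l, IsPath G s l v ∧ (∀ x ∈ l, x < s) ∧ m = (l.foldr max 0 : ℕ)})
    ⟨_, l, hl, hls, rfl⟩

theorem maxId_eq_zero_of_adj {w : ℕ} (hw : G s w) : maxId G s w = 0 :=
  nonpos_iff_eq_zero.mp (maxId_le_of_isPath (l := []) hw (by simp))

theorem maxId_le_max_of_adj {u v : ℕ} (huv : G u v) (hus : u < s)
    (hu : ∃ l, IsPath G s l u ∧ ∀ x ∈ l, x < s) :
    maxId G s v ≤ max (maxId G s u) (u : ℕ∞) := by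
  obtain ⟨l, hl, hls⟩ := hu
  obtain ⟨l', hl', hl's, hmax⟩ := exists_isPath_foldr_max_eq_maxId hl hls
  have hpath : IsPath G s (l' ++ [u]) v := (isPath_append_singleton G l' s u v).2 ⟨hl', huv⟩
  have hadm : ∀ x ∈ l' ++ [u], x < s := by
    simpa only [List.mem_append, List.mem_singleton, or_imp, forall_and, forall_eq] using
      ⟨hl's, hus⟩
  calc maxId G s v ≤ ((l' ++ [u]).foldr max 0 : ℕ) := maxId_le_of_isPath hpath hadm
    _ = max (maxId G s u) (u : ℕ∞) := by
      rw [foldr_max_append_singleton, hmax, Nat.mono_cast.map_max]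

theorem le_foldr_max_of_isPath {f : ℕ → ℕ∞} (hf₀ : ∀ w, G s w → f w = 0)
    (hf : ∀ u v, G u v → u < s → f v ≤ max (f u) (u : ℕ∞)) (l : List ℕ) :
    ∀ v, IsPath G s l v → (∀ x ∈ l, x < s) → f v ≤ (l.foldr max 0 : ℕ) := by
  induction l using List.reverseRecOn with
  | nil => intro v hv _; simp [hf₀ v hv]
  | append_singleton l u ih =>
    intro v hv hls
    obtain ⟨hl, huv⟩ := (isPath_append_singleton G l s u v).1 hv
    calc f v ≤ max (f u) (u : ℕ∞) := hf u v huv (hls u (by simp))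
      _ ≤ max ((l.foldr max 0 : ℕ) : ℕ∞) (u : ℕ∞) :=
        max_le_max_right _ (ih u hl fun x hx => hls x (by simp [hx]))
      _ = ((l ++ [u]).foldr max 0 : ℕ) := by
        rw [foldr_max_append_singleton, Nat.mono_cast.map_max]

theorem le_maxId {f : ℕ → ℕ∞} (hf₀ : ∀ w, G s w → f w = 0)
    (hf : ∀ u v, G u v → u < s → f v ≤ max (f u) (u : ℕ∞)) (v : ℕ) : f v ≤ maxId G s v := by
  refine le_sInf ?_
  rintro m ⟨l, hl, hls, rfl⟩
  exact le_foldr_max_of_isPath hf₀ hf l v hl hls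

end

/-- `maxId` is the least fixed point of the gSoFa relaxation operator:
it vanishes on direct out-neighbors of `s`, satisfies the relaxation
inequality `maxId v ≤ max (maxId u) u` along edges `(u,v)` with `u < s`
emanating from admissibly reachable vertices, and it is pointwise the largest
function satisfying these constraints. -/
theorem maxId_least_fixed_point (G : ℕ → ℕ → Prop) (s : ℕ) :
    (∀ w, G s w → maxId G s w = 0) ∧
    (∀ u v, G u v → u < s → (∃ l, IsPath G s l u ∧ ∀ x ∈ l, x < s) →
        maxId G s v ≤ max (maxId G s u) (u : ℕ∞)) ∧
    (∀ f : ℕ → ℕ∞,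
        (∀ w, G s w → f w = 0) →
        (∀ u v, G u v → u < s → f v ≤ max (f u) (u : ℕ∞)) →
        ∀ v, f v ≤ maxId G s v) :=
  ⟨fun _ hw => maxId_eq_zero_of_adj hw,
    fun _ _ huv hus hu => maxId_le_max_of_adj huv hus hu,
    fun _ hf₀ hf => le_maxId hf₀ hf⟩
end

section
/- Sequential fill2 with parallel frontier processing can miss fill-ins: there exists a directed graph G on vertices {0,...,9} (e.g., the example graph of the paper, where vertex 8 has out-neighbors {1,2,7,9}, vertex 2 has out-neighbors {3,5,7}, vertex 7 has out-neighbors {2,4}, vertex 3 has out-neighbor 4, among others) and a source s = 8 such that: there is a fill-path from 8 to 4 (namely 8→2→3→4), but in the 'visit each vertex at most once' scheme—where a vertex's fill flag is set upon first visit regardless of the path's maximum intermediate vertex—there exists an order of processing the frontiers {1,2,7} in parallel under which vertex 4 is first visited via the path 8→7→4 (whose intermediate vertex 7 is not < 4), and hence the fill-in (8,4) is never reported. -/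
/-- A single-visit (naive parallel fill2) run from source `s`: `vp v` records
the (unique) admissible path by which `v` was first visited, if any.
Conditions: recorded paths are admissible; each recorded path extends the
recorded path of its predecessor frontier (first-visit consistency); all
out-neighbors of `s` are visited; and every neighbor of a visited frontier
(`< s`) is visited (completeness of the single-visit traversal). -/
def VisitRun (G : ℕ → ℕ → Prop) (s : ℕ) (vp : ℕ → Option (List ℕ)) : Prop :=
  (∀ v l, vp v = some l → IsPath G s l v ∧ ∀ x ∈ l, x < s) ∧
  (∀ v l, vp v = some l →
      (l = [] ∧ G s v) ∨ ∃ l' u, l = l' ++ [u] ∧ vp u = some l' ∧ G u v ∧ u < s) ∧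
  (∀ v, G s v → (vp v).isSome) ∧
  (∀ u l v, vp u = some l → u < s → G u v → (vp v).isSome)

def g : ℕ → ℕ → Bool := fun u v =>
  (u == 8 && (v == 1 || v == 2 || v == 7 || v == 9)) ||
  (u == 2 && (v == 3 || v == 5 || v == 7)) ||
  (u == 7 && (v == 2 || v == 4)) ||
  (u == 3 && v == 4)

def myvp : ℕ → Option (List ℕ)
  | 1 => some [] | 2 => some [] | 7 => some [] | 9 => some []
  | 3 => some [2] | 5 => some [2] | 4 => some [7]
  | _ => none

lemma g_bound : ∀ u v, g u v = true → u < 10 ∧ v < 10 := by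
  intro u v h
  simp only [g, Bool.or_eq_true, Bool.and_eq_true, beq_iff_eq] at h
  omega


/-- Counterexample: parallel frontier processing with single-visit semantics can
miss fill-ins. There is a graph on `{0,…,9}` (the paper's example: `8 → {1,2,7,9}`,
`2 → {3,5,7}`, `7 → {2,4}`, `3 → 4`) with a genuine fill-path `8→2→3→4`, yet some
valid single-visit run first reaches vertex `4` via `8→7→4` (intermediate `7 ≮ 4`),
so the fill-in `(8,4)` is never reported. -/
theorem naive_parallel_fill2_unsound :
    ∃ G : ℕ → ℕ → Prop,
      G 8 1 ∧ G 8 2 ∧ G 8 7 ∧ G 8 9 ∧ G 2 3 ∧ G 2 5 ∧ G 2 7 ∧ G 7 2 ∧ G 7 4 ∧ G 3 4 ∧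
      (∀ u v, G u v → u < 10 ∧ v < 10) ∧
      FillPath G 8 4 ∧
      ∃ vp : ℕ → Option (List ℕ), VisitRun G 8 vp ∧ vp 4 = some [7] ∧
        ¬ ∃ l, vp 4 = some l ∧ ∀ x ∈ l, x < 8 ∧ x < 4 := by
  refine ⟨fun u v => g u v = true, by decide, by decide, by decide, by decide, by decide,
    by decide, by decide, by decide, by decide, by decide, g_bound,
    ⟨[2,3], ⟨by decide, by decide, (by decide : g 3 4 = true)⟩, by decide⟩,
    myvp, ⟨?_, ?_, ?_, ?_⟩, rfl, ?_⟩
  · intro v l h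
    rcases v with _|_|_|_|_|_|_|_|_|_|v <;> simp [myvp] at h <;> subst h
    · exact ⟨(by decide : g 8 1 = true), by decide⟩
    · exact ⟨(by decide : g 8 2 = true), by decide⟩
    · exact ⟨⟨by decide, (by decide : g 2 3 = true)⟩, by decide⟩
    · exact ⟨⟨by decide, (by decide : g 7 4 = true)⟩, by decide⟩
    · exact ⟨⟨by decide, (by decide : g 2 5 = true)⟩, by decide⟩
    · exact ⟨(by decide : g 8 7 = true), by decide⟩
    · exact ⟨(by decide : g 8 9 = true), by decide⟩
  · intro v l h
    rcases v with _|_|_|_|_|_|_|_|_|_|v <;> simp [myvp] at h <;> subst h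
    · exact Or.inl ⟨rfl, by decide⟩
    · exact Or.inl ⟨rfl, by decide⟩
    · exact Or.inr ⟨[], 2, rfl, rfl, by decide, by decide⟩
    · exact Or.inr ⟨[], 7, rfl, rfl, by decide, by decide⟩
    · exact Or.inr ⟨[], 2, rfl, rfl, by decide, by decide⟩
    · exact Or.inl ⟨rfl, by decide⟩
    · exact Or.inl ⟨rfl, by decide⟩
  · intro v h
    have hb := (g_bound _ _ h).2
    interval_cases v <;> revert h <;> decide
  · intro u l v hu hlt hG
    have hb := (g_bound _ _ hG).2
    have hb' := (g_bound _ _ hG).1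
    interval_cases v <;> interval_cases u <;> revert hG <;> decide
  · rintro ⟨l, hl, hall⟩
    simp [myvp] at hl
    subst hl
    have := hall 7 (by simp)
    omega
end

section
/- Gaussian-elimination interpretation of fill-paths: define the fill relation F recursively by F(i,j) iff (i,j) is an edge of G, or there exists k < min(i,j) with F(i,k) and F(k,j). Then F(i,j) holds iff there exists a fill-path from i to j in G (a directed path with all intermediate vertices < min(i,j)). -/
/-- The fill relation of symbolic Gaussian elimination, defined recursively:
`F i j` iff `(i,j)` is an edge, or some pivot `k < min i j` has `F i k` and `F k j`. -/
inductive FillRel (G : ℕ → ℕ → Prop) : ℕ → ℕ → Prop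
  | base {i j : ℕ} : G i j → FillRel G i j
  | step {i j k : ℕ} : k < i → k < j → FillRel G i k → FillRel G k j → FillRel G i j

lemma isPath_append (G : ℕ → ℕ → Prop) :
    ∀ (xs : List ℕ) (a m b : ℕ) (ys : List ℕ),
      IsPath G a xs m → IsPath G m ys b → IsPath G a (xs ++ m :: ys) b
  | [], a, m, b, ys, h1, h2 => ⟨h1, h2⟩
  | x :: xs, a, m, b, ys, h1, h2 => ⟨h1.1, isPath_append G xs x m b ys h1.2 h2⟩

lemma isPath_prefix (G : ℕ → ℕ → Prop) :
    ∀ (xs : List ℕ) (a y b : ℕ) (ys : List ℕ),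
      IsPath G a (xs ++ y :: ys) b → IsPath G a xs y
  | [], a, y, b, ys, h => h.1
  | x :: xs, a, y, b, ys, h => ⟨h.1, isPath_prefix G xs x y b ys h.2⟩

lemma isPath_suffix (G : ℕ → ℕ → Prop) :
    ∀ (xs : List ℕ) (a y b : ℕ) (ys : List ℕ),
      IsPath G a (xs ++ y :: ys) b → IsPath G y ys b
  | [], a, y, b, ys, h => h.2
  | x :: xs, a, y, b, ys, h => isPath_suffix G xs x y b ys h.2

lemma first_occ {x : ℕ} : ∀ {l : List ℕ}, x ∈ l → ∃ s t, l = s ++ x :: t ∧ x ∉ s := by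
  intro l hl
  induction l with
  | nil => cases hl
  | cons a l ih =>
    by_cases hax : a = x
    · exact ⟨[], l, by simp [hax], by simp⟩
    · have hxl : x ∈ l := by
        rcases List.mem_cons.1 hl with h | h
        · exact absurd h.symm hax
        · exact h
      rcases ih hxl with ⟨s, t, hst, hxs⟩
      refine ⟨a :: s, t, by simp [hst], ?_⟩
      simp only [List.mem_cons, not_or]
      exact ⟨fun h => hax h.symm, hxs⟩

lemma last_occ {x : ℕ} : ∀ {l : List ℕ}, x ∈ l → ∃ s t, l = s ++ x :: t ∧ x ∉ t := by
  intro l hl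
  rcases first_occ (l := l.reverse) (by simpa using hl) with ⟨s, t, hst, hxs⟩
  refine ⟨t.reverse, s.reverse, ?_, by simpa using hxs⟩
  have := congrArg List.reverse hst
  simpa using this

lemma list_max : ∀ (l : List ℕ), l ≠ [] → ∃ k ∈ l, ∀ v ∈ l, v ≤ k := by
  intro l
  induction l with
  | nil => simp
  | cons a l ih =>
    intro _
    rcases eq_or_ne l [] with rfl | hl
    · exact ⟨a, by simp⟩
    · rcases ih hl with ⟨k, hk, hmax⟩
      rcases le_total a k with h | h
      · exact ⟨k, by simp [hk], by
          intro v hv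
          rcases List.mem_cons.1 hv with rfl | hv
          · exact h
          · exact hmax v hv⟩
      · exact ⟨a, by simp, by
          intro v hv
          rcases List.mem_cons.1 hv with rfl | hv
          · exact le_rfl
          · exact (hmax v hv).trans h⟩

lemma path_to_fill (G : ℕ → ℕ → Prop) :
    ∀ (n : ℕ) (l : List ℕ), l.length = n →
      ∀ (i j : ℕ), IsPath G i l j → (∀ v ∈ l, v < i ∧ v < j) → FillRel G i j := by
  intro n
  induction n using Nat.strong_induction_on with
  | _ n ih =>
    intro l hn i j hp hb
    rcases eq_or_ne l [] with rfl | hl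
    · exact .base hp
    · rcases list_max l hl with ⟨k, hkl, hmax⟩
      rcases first_occ hkl with ⟨s1, t1, h1, hks1⟩
      rcases last_occ hkl with ⟨s2, t2, h2, hkt2⟩
      have hik : FillRel G i k := by
        refine ih s1.length ?_ s1 rfl i k (isPath_prefix G s1 i k j t1 (h1 ▸ hp)) ?_
        · rw [← hn, h1]; simp
        · intro v hv
          have hvl : v ∈ l := h1 ▸ List.mem_append_left _ hv
          exact ⟨(hb v hvl).1, lt_of_le_of_ne (hmax v hvl) (fun h => hks1 (h ▸ hv))⟩
      have hkj : FillRel G k j := by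
        refine ih t2.length ?_ t2 rfl k j (isPath_suffix G s2 i k j t2 (h2 ▸ hp)) ?_
        · rw [← hn, h2]; simp; omega
        · intro v hv
          have hvl : v ∈ l := h2 ▸ List.mem_append_right _ (List.mem_cons_of_mem _ hv)
          exact ⟨lt_of_le_of_ne (hmax v hvl) (fun h => hkt2 (h ▸ hv)), (hb v hvl).2⟩
      exact .step (hb k hkl).1 (hb k hkl).2 hik hkj

/-- Rose–Tarjan fill-path theorem, Gaussian-elimination form: the recursive fill
relation holds at `(i,j)` iff there is a fill-path from `i` to `j` in `G`. -/
theorem fillRel_iff_fillPath (G : ℕ → ℕ → Prop) (i j : ℕ) :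
    FillRel G i j ↔ FillPath G i j := by
  constructor
  · intro h
    induction h with
    | base hg => exact ⟨[], hg, by simp⟩
    | step hki hkj _ _ ih1 ih2 =>
      rcases ih1 with ⟨l1, hp1, hb1⟩
      rcases ih2 with ⟨l2, hp2, hb2⟩
      refine ⟨l1 ++ _ :: l2, isPath_append G l1 _ _ _ l2 hp1 hp2, ?_⟩
      intro v hv
      rcases List.mem_append.1 hv with hv | hv
      · exact ⟨(hb1 v hv).1, (hb1 v hv).2.trans hkj⟩
      · rcases List.mem_cons.1 hv with rfl | hv
        · exact ⟨hki, hkj⟩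
        · exact ⟨(hb2 v hv).1.trans hki, (hb2 v hv).2⟩
  · rintro ⟨l, hp, hb⟩
    exact path_to_fill G l.length l rfl i j hp hb
end

section
/- T3 supernode structure propagation: suppose rows r, r+1, ..., s-1 of the filled upper-triangular structure U all have the property that row t's nonzero column set equals {t} ∪ (row (t-1)'s nonzero column set \ {t-1}) for r < t ≤ s-1, established inductively from the conditions nnz(U(t,:)) = nnz(U(t-1,:)) - 1 and L(t,r) ≠ 0. Then under symbolic Gaussian elimination semantics (row t receives the union of the patterns of all pivot rows k < t with L(t,k) ≠ 0, restricted to columns ≥ t, unioned with its original pattern), the condition L(s,r) ≠ 0 implies the nonzero column set of row r of U, restricted to columns ≥ s, is a subset of the nonzero column set of row s of U; if additionally nnz(U(s,:)) = nnz(U(s-1,:)) - 1, then rows s and s-1 have identical column sets when restricted to columns ≥ s, i.e., row s extends the supernode. -/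
/-- `Urow pattern t` : the filled upper-triangular structure of row `t`,
i.e. the columns `j ≥ t` with a (filled) nonzero in row `t`. -/
def Urow (pattern : ℕ → Finset ℕ) (t : ℕ) : Finset ℕ :=
  (pattern t).filter (fun j => t ≤ j)

/-- T3 supernode structure propagation. `pattern t` is the filled pattern of row
`t`; `hsem` is the symbolic-elimination semantics (row `t` receives, beyond its
original pattern, the pattern of each pivot row `k < t` with `L(t,k) ≠ 0` — i.e.
`k ∈ pattern t` — restricted to columns `> k`); the diagonal is always present.
Suppose rows `r < t ≤ s-1` satisfy the supernode structure
`U(t,:) = {t} ∪ (U(t-1,:) \ {t-1})`.  Then `L(s,r) ≠ 0` implies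
`U(r,:)` restricted to columns `≥ s` is contained in `U(s,:)`; and if moreover
`nnz(U(s,:)) = nnz(U(s-1,:)) - 1`, rows `s` and `s-1` have identical column sets
restricted to columns `≥ s`, i.e. row `s` extends the supernode. -/
theorem t3_supernode_propagation
    (pattern orig : ℕ → Finset ℕ)
    (hdiag : ∀ t, t ∈ pattern t)
    (hsem : ∀ t, pattern t =
      orig t ∪ (Finset.range t).biUnion
        (fun k => if k ∈ pattern t then (pattern k).filter (fun j => k < j) else ∅))
    (r s : ℕ) (hrs : r < s)
    (hsuper : ∀ t, r < t → t ≤ s - 1 →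
      Urow pattern t = insert t ((Urow pattern (t - 1)).erase (t - 1))) :
    (r ∈ pattern s →
      (Urow pattern r).filter (fun j => s ≤ j) ⊆ Urow pattern s) ∧
    (r ∈ pattern s →
      (Urow pattern s).card + 1 = (Urow pattern (s - 1)).card →
      Urow pattern s = (Urow pattern (s - 1)).filter (fun j => s ≤ j)) := by

  have hsub : r ∈ pattern s → (Urow pattern r).filter (fun j => s ≤ j) ⊆ Urow pattern s := by
    intro hr j hj
    simp only [Urow, Finset.mem_filter] at hj ⊢
    obtain ⟨⟨hjr, hrj⟩, hsj⟩ := hj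
    refine ⟨?_, hsj⟩
    rw [hsem s]
    apply Finset.mem_union_right
    refine Finset.mem_biUnion.2 ⟨r, Finset.mem_range.2 hrs, ?_⟩
    simp only [hr, if_true, Finset.mem_filter]
    exact ⟨hjr, by omega⟩
  refine ⟨hsub, ?_⟩
  intro hr hcard
  have aux : ∀ t, r ≤ t → t ≤ s - 1 →
      Urow pattern t = insert t ((Urow pattern r).filter (fun j => t ≤ j)) := by
    intro t ht
    induction t, ht using Nat.le_induction with
    | base =>
      intro _
      have h1 : (Urow pattern r).filter (fun j => r ≤ j) = Urow pattern r := by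
        ext j
        simp only [Urow, Finset.mem_filter]
        tauto
      rw [h1]
      have : r ∈ Urow pattern r := by
        simp [Urow, hdiag r]
      exact (Finset.insert_eq_self.2 this).symm
    | succ t ht ih =>
      intro hts
      rw [hsuper (t+1) (by omega) hts]
      simp only [Nat.add_sub_cancel]
      rw [ih (by omega), Finset.erase_insert_eq_erase]
      congr 1
      ext j
      simp only [Finset.mem_erase, Finset.mem_filter]
      constructor
      · rintro ⟨hne, hA, htj⟩; exact ⟨hA, by omega⟩
      · rintro ⟨hA, htj⟩; exact ⟨by omega, hA, by omega⟩
  set F := (Urow pattern r).filter (fun j => s ≤ j) with hF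
  have h1 : Urow pattern (s-1) = insert (s-1) F := by
    rw [aux (s-1) (by omega) le_rfl]
    ext j
    simp only [hF, Finset.mem_insert, Finset.mem_filter]
    constructor
    · rintro (h | ⟨hA, hj⟩)
      · exact Or.inl h
      · rcases Nat.lt_or_ge j s with h2 | h2
        · left; omega
        · right; exact ⟨hA, h2⟩
    · rintro (h | ⟨hA, hj⟩)
      · exact Or.inl h
      · right; exact ⟨hA, by omega⟩
  have hns : (s-1) ∉ F := by
    simp only [hF, Finset.mem_filter]
    rintro ⟨_, h⟩; omega
  have hc1 : (Urow pattern (s-1)).card = F.card + 1 := by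
    rw [h1, Finset.card_insert_of_notMem hns]
  have hce : (Urow pattern s).card = F.card := by omega
  have heq : F = Urow pattern s :=
    Finset.eq_of_subset_of_card_le (hsub hr) (le_of_eq hce)
  rw [← heq, h1]
  ext j
  simp only [hF, Finset.mem_filter, Finset.mem_insert]
  constructor
  · rintro ⟨hA, hj⟩; exact ⟨Or.inr ⟨hA, hj⟩, hj⟩
  · rintro ⟨h | ⟨hA, hj⟩, hj2⟩
    · omega
    · exact ⟨hA, hj⟩
end

section
/- Workload monotonicity bound: for source vertex s, every vertex v visited during the fill2/gSoFa traversal from s (i.e., every vertex appearing on some admissible path from s) satisfies v < s or v is a direct out-neighbor of s; hence the set of possibly-visited vertices has size at most s + outdeg(s) + 1, and the total frontier workload for source s is bounded by the number of edges in the subgraph induced on {0,...,s-1} plus outdeg(s). In particular the worst-case per-source workload is nondecreasing in s for graphs where induced subgraphs grow with s. -/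
/-- Workload bound for the traversal from source `s` in a graph given by
out-neighbor lists `adj`.  (1) Every vertex visited during the admissible
traversal from `s` (appearing on an admissible path, as an intermediate or as
the endpoint of the first step) is `< s` or a direct out-neighbor of `s`;
(2) hence any set of visited vertices has size at most `s + outdeg(s) + 1`;
(3) every traversed edge emanates from `s` or from a frontier `< s`, so the
total frontier workload is bounded by the number of edges in the subgraph
induced on `{0,…,s-1}` plus `outdeg(s)`; and (4) this worst-case bound is
nondecreasing in the source ID. -/
theorem traversal_workload_bound (adj : ℕ → Finset ℕ) (s : ℕ) :
    (∀ v w l, IsPath (fun a b => b ∈ adj a) s l w → (∀ x ∈ l, x < s) →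
        (v ∈ l ∨ (l = [] ∧ v = w)) → (v < s ∨ v ∈ adj s)) ∧
    (∀ S : Finset ℕ, (∀ v ∈ S, v < s ∨ v ∈ adj s ∨ v = s) →
        S.card ≤ s + (adj s).card + 1) ∧
    (∀ E : Finset (ℕ × ℕ), (∀ p ∈ E, p.2 ∈ adj p.1 ∧ (p.1 = s ∨ p.1 < s)) →
        E.card ≤ (∑ u ∈ Finset.range s, (adj u).card) + (adj s).card) ∧
    (∀ s' : ℕ, s ≤ s' →
        (∑ u ∈ Finset.range s, (adj u).card) ≤ ∑ u ∈ Finset.range s', (adj u).card) := by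
  refine ⟨?_, ?_, ?_, ?_⟩
  · rintro v w l hp hlt (hv | ⟨rfl, rfl⟩)
    · exact Or.inl (hlt v hv)
    · exact Or.inr hp
  · intro S hS
    have hsub : S ⊆ (Finset.range s ∪ adj s) ∪ {s} := by
      intro v hv
      rcases hS v hv with h | h | h
      · exact Finset.mem_union_left _ (Finset.mem_union_left _ (Finset.mem_range.mpr h))
      · exact Finset.mem_union_left _ (Finset.mem_union_right _ h)
      · exact Finset.mem_union_right _ (by simp [h])
    calc S.card ≤ ((Finset.range s ∪ adj s) ∪ {s}).card := Finset.card_le_card hsub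
      _ ≤ (Finset.range s ∪ adj s).card + ({s} : Finset ℕ).card := Finset.card_union_le _ _
      _ ≤ ((Finset.range s).card + (adj s).card) + 1 := by
          have := Finset.card_union_le (Finset.range s) (adj s)
          simp only [Finset.card_singleton]
          omega
      _ = s + (adj s).card + 1 := by simp
  · intro E hE
    have hsub : E ⊆ (Finset.range s).biUnion (fun u => {u} ×ˢ adj u) ∪ {s} ×ˢ adj s := by
      intro p hp
      rcases hE p hp with ⟨h1, rfl | hlt⟩
      · exact Finset.mem_union_right _ (by
          rw [Finset.mem_product]
          exact ⟨Finset.mem_singleton_self _, h1⟩)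
      · refine Finset.mem_union_left _ ?_
        simp only [Finset.mem_biUnion, Finset.mem_range, Finset.mem_product,
          Finset.mem_singleton]
        exact ⟨p.1, hlt, rfl, h1⟩
    calc E.card ≤ ((Finset.range s).biUnion (fun u => {u} ×ˢ adj u)).card
            + ({s} ×ˢ adj s).card := le_trans (Finset.card_le_card hsub)
              (Finset.card_union_le _ _)
      _ ≤ (∑ u ∈ Finset.range s, ({u} ×ˢ adj u).card) + (adj s).card := by
          gcongr
          · exact Finset.card_biUnion_le
          · simp
      _ ≤ (∑ u ∈ Finset.range s, (adj u).card) + (adj s).card := by simp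
  · intro s' h
    exact Finset.sum_le_sum_of_subset (Finset.range_subset_range.mpr h)
end
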